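/- Let m ≥ 1 and let a < b be real numbers. Let S = {x ∈ ℝ^m : a ≤ x_m ≤ b} be the closed slab. If u : ℝ^m → ℝ is bounded on S, continuous on S, harmonic on the open slab {x : a < x_m < b}, and equal to 0 at every point of the two hyperplanes {x_m = a} and {x_m = b}, then u vanishes identically on S. (Dirichlet parabolicity of the Euclidean slab, proved via the Khas'minskii test with the function (1/2)(x_m − a)(b − x_m) + ε|x|².) -/

import Mathlib

/-- The Euclidean Laplacian `Δu(x) = ∑ i, ∂²u/∂xᵢ²(x)`. -/
noncomputable def lap {n : ℕ} (u : EuclideanSpace ℝ (Fin n) → ℝ)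
    (x : EuclideanSpace ℝ (Fin n)) : ℝ :=
  ∑ i : Fin n,
    fderiv ℝ (fun y => fderiv ℝ u y (EuclideanSpace.single i 1)) x (EuclideanSpace.single i 1)

/-- `u` is harmonic on `U`: it is `C²` there and its Laplacian vanishes identically on `U`. -/
def IsHarmonicOn {n : ℕ} (u : EuclideanSpace ℝ (Fin n) → ℝ)
    (U : Set (EuclideanSpace ℝ (Fin n))) : Prop :=
  ContDiffOn ℝ 2 u U ∧ ∀ x ∈ U, lap u x = 0

/-!
Khas'minskii's argument. In the slab the barrier `φ = ½ (x_m - a) (b - x_m) + ε |x|²` is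
nonnegative, grows like `ε |x|²` at infinity and, for `ε < 1 / (2m)`, is strictly superharmonic.
For `λ > 0` the function `u - λ φ` has strictly positive Laplacian, so on the slab cut off by a
large ball it attains its maximum on the boundary: on the two hyperplanes it is `-λ φ ≤ 0`, and on
the sphere `λ φ` exceeds the bound of `u` once the radius is large. Hence `u ≤ λ φ` for every
`λ > 0`, so `u ≤ 0`; applied to `-u` this gives `u = 0`.
-/

open Filter Topology Set Laplacian InnerProductSpace

theorem lap_eq_laplacian {n : ℕ} {u : EuclideanSpace ℝ (Fin n) → ℝ} {x : EuclideanSpace ℝ (Fin n)}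
    (hu : ContDiffAt ℝ 2 u x) : lap u x = Δ u x := by
  have hfderiv : DifferentiableAt ℝ (fderiv ℝ u) x :=
    (hu.fderiv_right (m := 1) (by norm_num)).differentiableAt (by norm_num)
  rw [laplacian_eq_iteratedFDeriv_orthonormalBasis u (EuclideanSpace.basisFun (Fin n) ℝ)]
  refine Finset.sum_congr rfl fun i _ ↦ ?_
  have hcomp := ((ContinuousLinearMap.apply ℝ ℝ (EuclideanSpace.single i (1 : ℝ))).hasFDerivAt.comp
    x hfderiv.hasFDerivAt).fderiv
  simp only [Function.comp_def, ContinuousLinearMap.apply_apply] at hcomp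
  simp [iteratedFDeriv_two_apply, hcomp]

theorem IsHarmonicOn.harmonicOnNhd {n : ℕ} {u : EuclideanSpace ℝ (Fin n) → ℝ}
    {U : Set (EuclideanSpace ℝ (Fin n))} (hu : IsHarmonicOn u U) (hU : IsOpen U) :
    HarmonicOnNhd u U := fun x hx ↦
  ⟨hu.1.contDiffAt (hU.mem_nhds hx), by
    filter_upwards [hU.mem_nhds hx] with y hy
    rw [Pi.zero_apply, ← lap_eq_laplacian (hu.1.contDiffAt (hU.mem_nhds hy))]
    exact hu.2 y hy⟩

theorem IsLocalMax.deriv_deriv_nonpos {f : ℝ → ℝ} {x₀ : ℝ} (h : IsLocalMax f x₀)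
    (hc : ContinuousAt f x₀) : deriv (deriv f) x₀ ≤ 0 := by
  by_contra! hpos
  have hconst : f =ᶠ[𝓝 x₀] fun _ ↦ f x₀ := by
    filter_upwards [h, isLocalMin_of_deriv_deriv_pos hpos h.deriv_eq_zero hc] with x hmax hmin
    exact le_antisymm hmax hmin
  have hzero : deriv (deriv f) x₀ = 0 := by
    rw [hconst.deriv.deriv_eq]
    simp
  exact hpos.ne' hzero

theorem IsLocalMax.fderiv_fderiv_apply_self_nonpos {E : Type*} [NormedAddCommGroup E]
    [NormedSpace ℝ E] {v : E → ℝ} {x₀ : E} (h : IsLocalMax v x₀) (hv : ContDiffAt ℝ 2 v x₀)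
    (e : E) : fderiv ℝ (fderiv ℝ v) x₀ e e ≤ 0 := by
  have hline : ∀ t : ℝ, HasDerivAt (fun s : ℝ ↦ x₀ + s • e) e t := fun t ↦ by
    simpa using ((hasDerivAt_id t).smul_const e).const_add x₀
  have hline_tendsto : Tendsto (fun s : ℝ ↦ x₀ + s • e) (𝓝 0) (𝓝 x₀) := by
    simpa using (hline 0).continuousAt.tendsto
  have hdiff : ∀ᶠ y in 𝓝 x₀, DifferentiableAt ℝ v y :=
    (hv.eventually (by simp)).mono fun y hy ↦ hy.differentiableAt (by simp)
  have hderiv : deriv (fun t : ℝ ↦ v (x₀ + t • e)) =ᶠ[𝓝 0]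
      fun t ↦ fderiv ℝ v (x₀ + t • e) e := by
    filter_upwards [hline_tendsto.eventually hdiff] with t ht
    exact (ht.hasFDerivAt.comp_hasDerivAt t (hline t)).deriv
  have hfderiv : HasFDerivAt (fderiv ℝ v) (fderiv ℝ (fderiv ℝ v) x₀) x₀ :=
    ((hv.fderiv_right (m := 1) (by norm_num)).differentiableAt (by norm_num)).hasFDerivAt
  have hsecond : deriv (deriv fun t : ℝ ↦ v (x₀ + t • e)) 0 = fderiv ℝ (fderiv ℝ v) x₀ e e := by
    rw [hderiv.deriv_eq]
    have h1 : HasDerivAt (fun t : ℝ ↦ fderiv ℝ v (x₀ + t • e)) (fderiv ℝ (fderiv ℝ v) x₀ e) 0 :=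
      hfderiv.comp_hasDerivAt_of_eq 0 (hline 0) (by simp)
    exact ((ContinuousLinearMap.apply ℝ ℝ e).hasFDerivAt.comp_hasDerivAt 0 h1).deriv
  rw [← hsecond]
  refine IsLocalMax.deriv_deriv_nonpos ?_ ?_
  · simpa [IsLocalMax, IsMaxFilter] using hline_tendsto.eventually h
  · exact hv.continuousAt.comp_of_eq (hline 0).continuousAt (by simp)

variable {E : Type*} [NormedAddCommGroup E] [InnerProductSpace ℝ E] [FiniteDimensional ℝ E]

theorem IsLocalMax.laplacian_nonpos {v : E → ℝ} {x₀ : E} (h : IsLocalMax v x₀)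
    (hv : ContDiffAt ℝ 2 v x₀) : Δ v x₀ ≤ 0 := by
  rw [laplacian_eq_iteratedFDeriv_stdOrthonormalBasis]
  exact Finset.sum_nonpos fun i _ ↦ by
    simpa [iteratedFDeriv_two_apply] using h.fderiv_fderiv_apply_self_nonpos hv _

theorem IsCompact.nonpos_of_laplacian_pos {K O : Set E} (hK : IsCompact K) (hO : IsOpen O)
    (hOK : O ⊆ K) {w : E → ℝ} (hw_cont : ContinuousOn w K) (hw : ContDiffOn ℝ 2 w O)
    (hΔw : ∀ x ∈ O, 0 < Δ w x) (hw_bdry : ∀ x ∈ K \ O, w x ≤ 0) : ∀ x ∈ K, w x ≤ 0 := by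
  intro x hx
  obtain ⟨x₀, hx₀K, hmax⟩ := hK.exists_isMaxOn ⟨x, hx⟩ hw_cont
  refine (hmax hx).trans ?_
  by_cases hx₀O : x₀ ∈ O
  · have hloc : IsLocalMax w x₀ := (hmax.on_subset hOK).isLocalMax (hO.mem_nhds hx₀O)
    exact absurd (hloc.laplacian_nonpos (hw.contDiffAt (hO.mem_nhds hx₀O))) (hΔw x₀ hx₀O).not_ge
  · exact hw_bdry x₀ ⟨hx₀K, hx₀O⟩

theorem nonpos_of_laplacian_barrier {S U : Set E} (hS : IsClosed S) (hU : IsOpen U)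
    (hUS : U ⊆ S) {u φ : E → ℝ} (hu_bdd : BddAbove (u '' S)) (hu_cont : ContinuousOn u S)
    (hu : ContDiffOn ℝ 2 u U) (hΔu : ∀ x ∈ U, 0 ≤ Δ u x) (hu_bdry : ∀ x ∈ S \ U, u x ≤ 0)
    (hφ_cont : ContinuousOn φ S) (hφ : ContDiffOn ℝ 2 φ U) (hΔφ : ∀ x ∈ U, Δ φ x < 0)
    (hφ_bdry : ∀ x ∈ S \ U, 0 ≤ φ x) (hφ_growth : ∀ c, ∃ R, ∀ x ∈ S, R ≤ ‖x‖ → c ≤ φ x) :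
    ∀ x ∈ S, u x ≤ 0 := by
  obtain ⟨C, hC⟩ := hu_bdd
  have hle : ∀ x ∈ S, ∀ lam > 0, u x ≤ lam * φ x := by
    intro x hx lam hlam
    obtain ⟨R₀, hR₀⟩ := hφ_growth (C / lam)
    set R := max R₀ ‖x‖
    have hw := ((isCompact_closedBall 0 R).inter_left hS).nonpos_of_laplacian_pos
      (hU.inter Metric.isOpen_ball) (inter_subset_inter hUS Metric.ball_subset_closedBall)
      (w := u - lam • φ) (hu_cont.mono inter_subset_left |>.sub
        ((hφ_cont.mono inter_subset_left).const_smul lam))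
      ((hu.mono inter_subset_left).sub ((hφ.mono inter_subset_left).const_smul lam))
      (fun y hy ↦ ?_) (fun y hy ↦ ?_) x ⟨hx, by simp [R]⟩
    · simpa [sub_nonpos] using hw
    · have hφy := hφ.contDiffAt (hU.mem_nhds hy.1)
      have hlamφy : ContDiffAt ℝ 2 (lam • φ) y := hφy.const_smul lam
      rw [(hu.contDiffAt (hU.mem_nhds hy.1)).laplacian_sub hlamφy, laplacian_smul _ hφy,
        smul_eq_mul]
      nlinarith [hΔu y hy.1, hΔφ y hy.1]
    · obtain ⟨⟨hyS, -⟩, hyO⟩ := hy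
      simp only [Pi.sub_apply, Pi.smul_apply, smul_eq_mul, sub_nonpos]
      by_cases hyU : y ∈ U
      · have hRy : R ≤ ‖y‖ := by simpa [hyU] using hyO
        calc u y ≤ C := hC (mem_image_of_mem u hyS)
          _ = lam * (C / lam) := by field_simp
          _ ≤ lam * φ y := by gcongr; exact hR₀ y hyS ((le_max_left _ _).trans hRy)
      · exact (hu_bdry y ⟨hyS, hyU⟩).trans (mul_nonneg hlam.le (hφ_bdry y ⟨hyS, hyU⟩))
  intro x hx
  have hlim : Tendsto (fun lam ↦ lam * φ x) (𝓝[>] 0) (𝓝 0) := by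
    simpa using ((tendsto_id (x := 𝓝 (0 : ℝ))).mul_const (φ x)).mono_left nhdsWithin_le_nhds
  exact ge_of_tendsto hlim (eventually_mem_nhdsWithin.mono fun lam hlam ↦ hle x hx lam hlam)

theorem laplacian_eq_sum_of_hasFDerivAt {ι : Type*} [Fintype ι] (v : OrthonormalBasis ι ℝ E)
    {f : E → ℝ} {f' : E → E →L[ℝ] ℝ} {f'' : E →L[ℝ] E →L[ℝ] ℝ} {x : E}
    (hf : ∀ y, HasFDerivAt f (f' y) y) (hf' : HasFDerivAt f' f'' x) :
    Δ f x = ∑ i, f'' (v i) (v i) := by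
  have hfderiv : fderiv ℝ f = f' := funext fun y ↦ (hf y).fderiv
  simp [laplacian_eq_iteratedFDeriv_orthonormalBasis f v, iteratedFDeriv_two_apply, hfderiv,
    hf'.fderiv]

section Slab

variable {n : ℕ}

def slab (j : Fin n) (a b : ℝ) : Set (EuclideanSpace ℝ (Fin n)) := {x | a ≤ x j ∧ x j ≤ b}

def openSlab (j : Fin n) (a b : ℝ) : Set (EuclideanSpace ℝ (Fin n)) := {x | a < x j ∧ x j < b}

theorem isClosed_slab (j : Fin n) (a b : ℝ) : IsClosed (slab j a b) :=
  isClosed_Icc.preimage (EuclideanSpace.proj j).continuous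

theorem isOpen_openSlab (j : Fin n) (a b : ℝ) : IsOpen (openSlab j a b) :=
  isOpen_Ioo.preimage (EuclideanSpace.proj j).continuous

theorem openSlab_subset_slab (j : Fin n) (a b : ℝ) : openSlab j a b ⊆ slab j a b :=
  fun _ hx ↦ ⟨hx.1.le, hx.2.le⟩

noncomputable def slabBarrier (j : Fin n) (a b ε : ℝ) (x : EuclideanSpace ℝ (Fin n)) : ℝ :=
  1 / 2 * ((x j - a) * (b - x j)) + ε * ‖x‖ ^ 2

theorem contDiff_slabBarrier (j : Fin n) (a b ε : ℝ) : ContDiff ℝ 2 (slabBarrier j a b ε) := by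
  have hp := (EuclideanSpace.proj (𝕜 := ℝ) j).contDiff (n := 2)
  exact (((hp.sub contDiff_const).mul (contDiff_const.sub hp)).const_smul (1 / 2 : ℝ)).add
    (contDiff_const.mul (contDiff_norm_sq ℝ))

theorem laplacian_slabBarrier (j : Fin n) (a b ε : ℝ) (x : EuclideanSpace ℝ (Fin n)) :
    Δ (slabBarrier j a b ε) x = 2 * ε * n - 1 := by
  set p := EuclideanSpace.proj (𝕜 := ℝ) j
  -- `innerSL ℝ` is typed as a conjugate-linear map; `I` is the same map seen as a bilinear one.
  set I : EuclideanSpace ℝ (Fin n) →L[ℝ] EuclideanSpace ℝ (Fin n) →L[ℝ] ℝ := innerSL ℝ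
  have hI : ∀ y z, I y z = ⟪y, z⟫_ℝ := fun _ _ ↦ rfl
  set hess := (2 * ε) • I - p.smulRight p
  have hderiv : ∀ y, HasFDerivAt (slabBarrier j a b ε) (((a + b) / 2) • p + hess y) y := by
    intro y
    have := ((((p.hasFDerivAt (x := y)).sub_const a).mul
      ((hasFDerivAt_const b y).sub p.hasFDerivAt)).const_mul (1 / 2)).add
      ((hasStrictFDerivAt_norm_sq y).hasFDerivAt.const_mul ε)
    refine this.congr_fderiv ?_
    ext z
    simp only [hess, p, hI, EuclideanSpace.coe_proj, smul_add, smul_neg, add_apply, neg_apply,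
      sub_apply, smul_apply, smul_eq_mul, coe_innerSL_apply, nsmul_eq_mul, zero_sub, Pi.sub_apply,
      ContinuousLinearMap.smulRight_apply]
    ring
  rw [laplacian_eq_sum_of_hasFDerivAt (EuclideanSpace.basisFun (Fin n) ℝ) hderiv
    (hess.hasFDerivAt.const_add _)]
  simp only [hess, sub_apply, smul_apply, ContinuousLinearMap.smulRight_apply, smul_eq_mul, hI]
  simp [p, mul_comm]

theorem mul_sq_norm_le_slabBarrier {j : Fin n} {a b : ℝ} (ε : ℝ) {x : EuclideanSpace ℝ (Fin n)}
    (hx : x ∈ slab j a b) : ε * ‖x‖ ^ 2 ≤ slabBarrier j a b ε x := by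
  have : 0 ≤ (x j - a) * (b - x j) := mul_nonneg (sub_nonneg.2 hx.1) (sub_nonneg.2 hx.2)
  unfold slabBarrier
  linarith

theorem eq_or_eq_of_mem_slab_diff_openSlab {j : Fin n} {a b : ℝ} {x : EuclideanSpace ℝ (Fin n)}
    (hx : x ∈ slab j a b \ openSlab j a b) : x j = a ∨ x j = b := by
  obtain ⟨⟨hax, hxb⟩, hx_open⟩ := hx
  rcases hax.eq_or_lt with ha | ha
  · exact .inl ha.symm
  rcases hxb.eq_or_lt with hb | hb
  · exact .inr hb
  exact absurd ⟨ha, hb⟩ hx_open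

theorem nonpos_on_slab (j : Fin n) {a b : ℝ} {u : EuclideanSpace ℝ (Fin n) → ℝ}
    (hu_bdd : BddAbove (u '' slab j a b)) (hu_cont : ContinuousOn u (slab j a b))
    (hu : ContDiffOn ℝ 2 u (openSlab j a b)) (hΔu : ∀ x ∈ openSlab j a b, 0 ≤ Δ u x)
    (hu_bdry : ∀ x, x j = a ∨ x j = b → u x ≤ 0) : ∀ x ∈ slab j a b, u x ≤ 0 := by
  set ε : ℝ := 1 / (2 * (n + 1))
  have hε : 0 < ε := by positivity
  have hφ := contDiff_slabBarrier j a b ε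
  refine nonpos_of_laplacian_barrier (isClosed_slab j a b) (isOpen_openSlab j a b)
    (openSlab_subset_slab j a b) hu_bdd hu_cont hu hΔu
    (fun x hx ↦ hu_bdry x (eq_or_eq_of_mem_slab_diff_openSlab hx)) hφ.continuous.continuousOn
    hφ.contDiffOn (fun x _ ↦ ?_)
    (fun x hx ↦ (mul_nonneg hε.le (sq_nonneg _)).trans (mul_sq_norm_le_slabBarrier ε hx.1))
    (fun c ↦ ⟨√(|c| / ε), fun x hx hR ↦ ?_⟩)
  · rw [laplacian_slabBarrier, sub_neg]
    simp only [ε]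
    field_simp
    linarith
  · calc c ≤ |c| := le_abs_self c
      _ = ε * √(|c| / ε) ^ 2 := by rw [Real.sq_sqrt (by positivity)]; field_simp
      _ ≤ ε * ‖x‖ ^ 2 := by gcongr
      _ ≤ slabBarrier j a b ε x := mul_sq_norm_le_slabBarrier ε hx

end Slab

/-- Dirichlet parabolicity of the Euclidean slab: a bounded continuous function on the closed
slab `{x ∈ ℝ^m : a ≤ x_m ≤ b}` which is harmonic in the open slab and vanishes on the two
boundary hyperplanes vanishes identically on the slab. -/
theorem dirichlet_parabolicity_slab (m : ℕ) (a b : ℝ)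
    (j : Fin m)
    (u : EuclideanSpace ℝ (Fin m) → ℝ)
    (hbd : ∃ C : ℝ, ∀ x ∈ {x : EuclideanSpace ℝ (Fin m) | a ≤ x j ∧ x j ≤ b}, |u x| ≤ C)
    (hcont : ContinuousOn u {x : EuclideanSpace ℝ (Fin m) | a ≤ x j ∧ x j ≤ b})
    (hharm : IsHarmonicOn u {x : EuclideanSpace ℝ (Fin m) | a < x j ∧ x j < b})
    (hzero : ∀ x : EuclideanSpace ℝ (Fin m), x j = a ∨ x j = b → u x = 0) :
    ∀ x ∈ {x : EuclideanSpace ℝ (Fin m) | a ≤ x j ∧ x j ≤ b}, u x = 0 := by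
  obtain ⟨C, hC⟩ := hbd
  have hle : ∀ w : EuclideanSpace ℝ (Fin m) → ℝ, HarmonicOnNhd w (openSlab j a b) →
      ContinuousOn w (slab j a b) → (∀ x ∈ slab j a b, w x ≤ C) →
      (∀ x, x j = a ∨ x j = b → w x = 0) → ∀ x ∈ slab j a b, w x ≤ 0 :=
    fun w hw hw_cont hwC hw_bdry ↦ nonpos_on_slab j ⟨C, forall_mem_image.2 hwC⟩ hw_cont
      hw.contDiffOn (fun x hx ↦ (hw x hx).2.self_of_nhds.ge) (fun x hx ↦ (hw_bdry x hx).le)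
  have hH : HarmonicOnNhd u (openSlab j a b) := hharm.harmonicOnNhd (isOpen_openSlab j a b)
  intro x hx
  refine le_antisymm (hle u hH hcont (fun y hy ↦ (le_abs_self _).trans (hC y hy)) hzero x hx) ?_
  exact neg_nonpos.1 (hle (-u) hH.neg hcont.neg (fun y hy ↦ (neg_le_abs _).trans (hC y hy))
    (fun y hy ↦ by simp [hzero y hy]) x hx)
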